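/- arXiv:1809.10785 — 3 statements merged into one kernel-verified Lean document; each statement's English description precedes it below -/
import Mathlib

section
/- Let T be a (κ,λ) Baker's map with transfer operator ℒ, and define the weak norm |f|_w = sup over vertical segments W and Lipschitz φ on W with |φ|_{C¹(W)} ≤ 1 of ∫_W (ℒf)·φ dm_W, for f ∈ C¹(W^u). Then for all n ≥ 0, |ℒⁿf|_w ≤ |f|_w. -/
open MeasureTheory

/-- Index of the vertical rectangle containing first coordinate `s`. -/
noncomputable def bIdx (κ : ℕ) (s : ℝ) : ℕ := min (κ - 1) ⌊(κ : ℝ) * s⌋₊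

/-- The `(κ,λ)` Baker's transformation. -/
noncomputable def bakerMap (κ : ℕ) (lam : ℝ) (d : ℕ → ℝ) (p : ℝ × ℝ) : ℝ × ℝ :=
  ((κ : ℝ) * p.1 - (bIdx κ p.1 : ℝ), lam * p.2 + d (bIdx κ p.1))

/-- The transfer operator `ℒf(x) = f(T⁻¹x)/(κλ)` of the Baker map, written via
the inverse branches (one for each horizontal image strip). -/
noncomputable def Lop (κ : ℕ) (lam : ℝ) (d : ℕ → ℝ) (f : ℝ × ℝ → ℝ) (p : ℝ × ℝ) : ℝ :=
  ((κ : ℝ) * lam)⁻¹ *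
    ∑ i ∈ Finset.range κ,
      if d i ≤ p.2 ∧ p.2 ≤ d i + lam then f ((p.1 + i) / κ, (p.2 - d i) / lam) else 0

/-- The weak norm `|f|_w`: sup over vertical segments `W = {s} × [0,1]` and
Lipschitz test functions `φ` with `|φ|_{C¹(W)} ≤ 1` of `∫_W f φ dm_W`. -/
noncomputable def weakNorm (f : ℝ × ℝ → ℝ) : ℝ :=
  sSup {r | ∃ s ∈ Set.Icc (0 : ℝ) 1, ∃ φ : ℝ → ℝ, ∃ c₀ c₁ : ℝ, c₀ + c₁ ≤ 1 ∧
    (∀ t ∈ Set.Icc (0 : ℝ) 1, |φ t| ≤ c₀) ∧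
    (∀ t ∈ Set.Icc (0 : ℝ) 1, ∀ t' ∈ Set.Icc (0 : ℝ) 1, |φ t - φ t'| ≤ c₁ * |t - t'|) ∧
    r = ∫ t in Set.Icc (0 : ℝ) 1, f (s, t) * φ t}

/-- The defining set of the weak norm. -/
def weakSet (f : ℝ × ℝ → ℝ) : Set ℝ :=
  {r | ∃ s ∈ Set.Icc (0 : ℝ) 1, ∃ φ : ℝ → ℝ, ∃ c₀ c₁ : ℝ, c₀ + c₁ ≤ 1 ∧
    (∀ t ∈ Set.Icc (0 : ℝ) 1, |φ t| ≤ c₀) ∧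
    (∀ t ∈ Set.Icc (0 : ℝ) 1, ∀ t' ∈ Set.Icc (0 : ℝ) 1, |φ t - φ t'| ≤ c₁ * |t - t'|) ∧
    r = ∫ t in Set.Icc (0 : ℝ) 1, f (s, t) * φ t}

lemma weakNorm_def (f : ℝ × ℝ → ℝ) : weakNorm f = sSup (weakSet f) := rfl

lemma phi_consts_nonneg {φ : ℝ → ℝ} {c₀ c₁ : ℝ}
    (hb : ∀ t ∈ Set.Icc (0 : ℝ) 1, |φ t| ≤ c₀)
    (hl : ∀ t ∈ Set.Icc (0 : ℝ) 1, ∀ t' ∈ Set.Icc (0 : ℝ) 1, |φ t - φ t'| ≤ c₁ * |t - t'|) :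
    0 ≤ c₀ ∧ 0 ≤ c₁ := by
  constructor
  · exact le_trans (abs_nonneg _) (hb 0 (by norm_num))
  · have h := hl 0 (by norm_num) 1 (by norm_num)
    have h0 : (0:ℝ) ≤ |φ 0 - φ 1| := abs_nonneg _
    have : |(0:ℝ) - 1| = 1 := by norm_num
    rw [this, mul_one] at h
    linarith

lemma weakSet_forall_le {g : ℝ × ℝ → ℝ} {C : ℝ} (hC : 0 ≤ C)
    (hgm : Measurable g) (hgb : ∀ p, |g p| ≤ C) :
    ∀ r ∈ weakSet g, r ≤ C := by
  rintro r ⟨s, hs, φ, c₀, c₁, hsum, hb, hl, rfl⟩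
  obtain ⟨hc₀, hc₁⟩ := phi_consts_nonneg hb hl
  have hc₀1 : c₀ ≤ 1 := by linarith
  have hφc : ContinuousOn φ (Set.Icc (0:ℝ) 1) := by
    rw [Metric.continuousOn_iff]
    intro b hb' ε hε
    rcases eq_or_lt_of_le hc₁ with h | h
    · refine ⟨1, one_pos, fun a ha _ => ?_⟩
      have := hl a ha b hb'
      rw [← h, zero_mul] at this
      rw [Real.dist_eq]
      have := abs_nonneg (φ a - φ b)
      linarith [hl a ha b hb', abs_nonneg (φ a - φ b), hε]
    · refine ⟨ε / c₁, by positivity, fun a ha hd => ?_⟩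
      have := hl a ha b hb'
      rw [Real.dist_eq] at hd ⊢
      calc |φ a - φ b| ≤ c₁ * |a - b| := this
        _ < c₁ * (ε / c₁) := by exact mul_lt_mul_of_pos_left hd h
        _ = ε := by field_simp
  have hmeas : AEStronglyMeasurable (fun t => g (s, t) * φ t)
      (volume.restrict (Set.Icc (0:ℝ) 1)) :=
    (hgm.comp (measurable_const.prodMk measurable_id)).aestronglyMeasurable.mul
      (hφc.aestronglyMeasurable measurableSet_Icc)
  have hvol : volume (Set.Icc (0:ℝ) 1) < ⊤ := by
    rw [Real.volume_Icc]; exact ENNReal.ofReal_lt_top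
  have hb' : ∀ t ∈ Set.Icc (0:ℝ) 1, ‖g (s, t) * φ t‖ ≤ C := by
    intro t ht
    rw [Real.norm_eq_abs, abs_mul]
    calc |g (s, t)| * |φ t| ≤ C * c₀ :=
          mul_le_mul (hgb _) (hb t ht) (abs_nonneg _) hC
      _ ≤ C * 1 := by nlinarith
      _ = C := mul_one C
  have := norm_setIntegral_le_of_norm_le_const hvol hb'
  rw [measureReal_def, Real.volume_Icc] at this
  simp only [Real.norm_eq_abs] at this
  calc (∫ t in Set.Icc (0:ℝ) 1, g (s, t) * φ t) ≤ |∫ t in Set.Icc (0:ℝ) 1, g (s, t) * φ t| :=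
        le_abs_self _
    _ ≤ C * (ENNReal.ofReal (1 - 0)).toReal := this
    _ = C := by norm_num

lemma weakSet_bddAbove {g : ℝ × ℝ → ℝ} {C : ℝ} (hC : 0 ≤ C)
    (hgm : Measurable g) (hgb : ∀ p, |g p| ≤ C) : BddAbove (weakSet g) :=
  ⟨C, weakSet_forall_le hC hgm hgb⟩

lemma zero_mem_weakSet (g : ℝ × ℝ → ℝ) : (0:ℝ) ∈ weakSet g := by
  refine ⟨0, by norm_num, fun _ => 0, 0, 0, by norm_num, by simp, by simp, by simp⟩

lemma weakNorm_nonneg {g : ℝ × ℝ → ℝ} {C : ℝ} (hC : 0 ≤ C)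
    (hgm : Measurable g) (hgb : ∀ p, |g p| ≤ C) : 0 ≤ weakNorm g :=
  le_csSup (weakSet_bddAbove hC hgm hgb) (zero_mem_weakSet g)

lemma Lop_measurable (κ : ℕ) (lam : ℝ) (d : ℕ → ℝ) {g : ℝ × ℝ → ℝ}
    (hg : Measurable g) : Measurable (Lop κ lam d g) := by
  unfold Lop
  refine Measurable.const_mul ?_ _
  refine Finset.measurable_sum _ (fun i _ => ?_)
  refine Measurable.ite ?_ ?_ measurable_const
  · exact (measurableSet_le measurable_const measurable_snd).inter
      (measurableSet_le measurable_snd measurable_const)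
  · exact hg.comp ((measurable_fst.add_const _).div_const _ |>.prodMk
      ((measurable_snd.sub_const _).div_const _))

lemma Lop_bound (κ : ℕ) (lam : ℝ) (d : ℕ → ℝ) (hκ : 2 ≤ κ) (hlam : 0 < lam)
    {g : ℝ × ℝ → ℝ} {C : ℝ} (hC : 0 ≤ C) (hgb : ∀ p, |g p| ≤ C) :
    ∀ p, |Lop κ lam d g p| ≤ C / lam := by
  intro p
  have hκ0 : (0:ℝ) < κ := by positivity
  unfold Lop
  rw [abs_mul]
  have h1 : |((κ:ℝ) * lam)⁻¹| = ((κ:ℝ) * lam)⁻¹ := abs_of_pos (by positivity)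
  rw [h1]
  have h2 : |∑ i ∈ Finset.range κ,
      if d i ≤ p.2 ∧ p.2 ≤ d i + lam then g ((p.1 + i) / κ, (p.2 - d i) / lam) else 0|
      ≤ (κ:ℝ) * C := by
    calc _ ≤ ∑ i ∈ Finset.range κ,
        |if d i ≤ p.2 ∧ p.2 ≤ d i + lam then g ((p.1 + i) / κ, (p.2 - d i) / lam) else 0| :=
          Finset.abs_sum_le_sum_abs _ _
      _ ≤ ∑ _i ∈ Finset.range κ, C := by
          refine Finset.sum_le_sum (fun i _ => ?_)
          split
          · exact hgb _
          · simpa using hC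
      _ = (κ:ℝ) * C := by rw [Finset.sum_const, Finset.card_range]; push_cast; ring
  calc ((κ:ℝ) * lam)⁻¹ * |_| ≤ ((κ:ℝ) * lam)⁻¹ * ((κ:ℝ) * C) := by
        exact mul_le_mul_of_nonneg_left h2 (by positivity)
    _ = C / lam := by field_simp

lemma integrableOn_of_bdd {f : ℝ → ℝ} {s : Set ℝ} (hs : MeasurableSet s)
    (hμ : volume s < ⊤) (hm : AEStronglyMeasurable f (volume.restrict s)) (M : ℝ)
    (hb : ∀ x ∈ s, |f x| ≤ M) : IntegrableOn f s := by
  refine Integrable.mono' (g := fun _ => M) (integrableOn_const hμ.ne) hm ?_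
  rw [ae_restrict_iff' hs]
  exact Filter.Eventually.of_forall (fun x hx => by simpa using hb x hx)

/-- One-step weak norm bound. -/
lemma Lop_weakNorm_le (κ : ℕ) (lam : ℝ) (d : ℕ → ℝ) (hκ : 2 ≤ κ) (hlam : 0 < lam)
    (hlamκ : lam ≤ 1 / κ) (hd : ∀ i < κ, 0 ≤ d i ∧ d i + lam ≤ 1)
    {g : ℝ × ℝ → ℝ} {C : ℝ} (hC : 0 ≤ C) (hgm : Measurable g) (hgb : ∀ p, |g p| ≤ C) :
    weakNorm (Lop κ lam d g) ≤ weakNorm g := by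
  have hκ0 : (0:ℝ) < κ := by positivity
  have hlam1 : lam ≤ 1 := by
    have : (1:ℝ)/κ ≤ 1 := by
      rw [div_le_one hκ0]
      exact_mod_cast Nat.one_le_iff_ne_zero.mpr (by omega)
    linarith
  have hWnn : 0 ≤ weakNorm g := weakNorm_nonneg hC hgm hgb
  rw [weakNorm_def, weakNorm_def]
  refine Real.sSup_le ?_ hWnn
  rintro r ⟨s, hs, φ, c₀, c₁, hsum, hb, hl, rfl⟩
  obtain ⟨hc₀, hc₁⟩ := phi_consts_nonneg hb hl
  -- continuity of φ on [0,1]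
  have hφc : ContinuousOn φ (Set.Icc (0:ℝ) 1) := by
    rw [Metric.continuousOn_iff]
    intro b hb' ε hε
    rcases eq_or_lt_of_le hc₁ with h | h
    · exact ⟨1, one_pos, fun a ha _ => by
        rw [Real.dist_eq]
        have h2 := hl a ha b hb'
        rw [← h, zero_mul] at h2
        linarith [abs_nonneg (φ a - φ b)]⟩
    · refine ⟨ε / c₁, by positivity, fun a ha hd' => ?_⟩
      rw [Real.dist_eq] at hd' ⊢
      calc |φ a - φ b| ≤ c₁ * |a - b| := hl a ha b hb'
        _ < c₁ * (ε / c₁) := mul_lt_mul_of_pos_left hd' h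
        _ = ε := by field_simp
  -- pointwise rewriting of integrand as a sum of indicator functions
  set h : ℕ → ℝ → ℝ := fun i t => g ((s + i) / κ, (t - d i) / lam) * φ t with hh
  have hpt : ∀ t, Lop κ lam d g (s, t) * φ t
      = ∑ i ∈ Finset.range κ,
          ((κ:ℝ) * lam)⁻¹ * (Set.Icc (d i) (d i + lam)).indicator (h i) t := by
    intro t
    unfold Lop
    rw [Finset.mul_sum, Finset.sum_mul]
    refine Finset.sum_congr rfl (fun i _ => ?_)
    rw [Set.indicator_apply]
    simp only [Set.mem_Icc]
    by_cases hcase : d i ≤ t ∧ t ≤ d i + lam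
    · simp [hcase, hh]; ring
    · simp [hcase]
  -- integrability of each piece
  have hint : ∀ i ∈ Finset.range κ, IntegrableOn
      (fun t => ((κ:ℝ) * lam)⁻¹ * (Set.Icc (d i) (d i + lam)).indicator (h i) t)
      (Set.Icc (0:ℝ) 1) := by
    intro i hi
    refine (integrableOn_of_bdd measurableSet_Icc ?_ ?_ (C * c₀) ?_).const_mul _
    · rw [Real.volume_Icc]; exact ENNReal.ofReal_lt_top
    · refine AEStronglyMeasurable.indicator ?_ measurableSet_Icc
      exact ((hgm.comp ((measurable_const).prodMk
          ((measurable_id.sub_const _).div_const _))).aestronglyMeasurable).mul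
        (hφc.aestronglyMeasurable measurableSet_Icc)
    · intro x hx
      rw [Set.indicator_apply]
      split
      · rw [hh]; simp only [abs_mul]
        exact mul_le_mul (hgb _) (hb x hx) (abs_nonneg _) hC
      · simp; positivity
  -- the integral splits as a sum
  rw [integral_congr_ae (Filter.Eventually.of_forall (fun t => hpt t)),
    integral_finset_sum _ hint]
  -- bound each term by κ⁻¹ * weakNorm g
  have hterm : ∀ i ∈ Finset.range κ,
      (∫ t in Set.Icc (0:ℝ) 1,
        ((κ:ℝ) * lam)⁻¹ * (Set.Icc (d i) (d i + lam)).indicator (h i) t)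
      ≤ ((κ:ℝ))⁻¹ * weakNorm g := by
    intro i hi
    rw [Finset.mem_range] at hi
    obtain ⟨hdi0, hdi1⟩ := hd i hi
    have hsub : Set.Icc (d i) (d i + lam) ⊆ Set.Icc (0:ℝ) 1 :=
      Set.Icc_subset_Icc hdi0 hdi1
    rw [integral_const_mul, setIntegral_indicator measurableSet_Icc,
      Set.inter_eq_self_of_subset_right hsub]
    -- change of variables
    have hcv : (∫ t in Set.Icc (d i) (d i + lam), h i t)
        = lam * ∫ u in Set.Icc (0:ℝ) 1, h i (lam * u + d i) := by
      have e1 : (∫ t in Set.Icc (d i) (d i + lam), h i t)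
          = ∫ t in (d i)..(d i + lam), h i t := by
        rw [integral_Icc_eq_integral_Ioc,
          intervalIntegral.integral_of_le (by linarith)]
      have e2 := intervalIntegral.integral_comp_mul_add (a := 0) (b := 1)
        (h i) (ne_of_gt hlam) (d i)
      rw [mul_zero, zero_add, mul_one] at e2
      have e3 : (∫ u in Set.Icc (0:ℝ) 1, h i (lam * u + d i))
          = ∫ u in (0:ℝ)..1, h i (lam * u + d i) := by
        rw [integral_Icc_eq_integral_Ioc,
          intervalIntegral.integral_of_le (by norm_num)]
      rw [e1, e3, e2, smul_eq_mul, add_comm (d i) lam]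
      field_simp
    rw [hcv]
    have hconst : ((κ:ℝ) * lam)⁻¹ * (lam * ∫ u in Set.Icc (0:ℝ) 1, h i (lam * u + d i))
        = ((κ:ℝ))⁻¹ * ∫ u in Set.Icc (0:ℝ) 1, h i (lam * u + d i) := by
      field_simp
    rw [hconst]
    refine mul_le_mul_of_nonneg_left ?_ (by positivity)
    -- the transformed integral belongs to weakSet g
    have hmem : (∫ u in Set.Icc (0:ℝ) 1, h i (lam * u + d i)) ∈ weakSet g := by
      refine ⟨(s + i) / κ, ?_, fun u => φ (lam * u + d i), c₀, c₁, hsum, ?_, ?_, ?_⟩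
      · constructor
        · have : (0:ℝ) ≤ s + i := by
            have := hs.1; positivity
          positivity
        · rw [div_le_one hκ0]
          have : (i:ℝ) ≤ (κ:ℝ) - 1 := by
            have : (i:ℝ) + 1 ≤ κ := by exact_mod_cast hi
            linarith
          linarith [hs.2]
      · intro u hu
        exact hb _ ⟨by nlinarith [hu.1, hu.2], by nlinarith [hu.1, hu.2]⟩
      · intro u hu u' hu'
        have := hl (lam * u + d i) ⟨by nlinarith [hu.1, hu.2], by nlinarith [hu.1, hu.2]⟩
          (lam * u' + d i) ⟨by nlinarith [hu'.1, hu'.2], by nlinarith [hu'.1, hu'.2]⟩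
        calc |φ (lam * u + d i) - φ (lam * u' + d i)|
            ≤ c₁ * |lam * u + d i - (lam * u' + d i)| := this
          _ = c₁ * (lam * |u - u'|) := by
              rw [show lam * u + d i - (lam * u' + d i) = lam * (u - u') by ring,
                abs_mul, abs_of_pos hlam]
          _ ≤ c₁ * |u - u'| := by
              nlinarith [mul_nonneg (mul_nonneg hc₁ (abs_nonneg (u - u')))
                (sub_nonneg.mpr hlam1)]
      · refine integral_congr_ae (Filter.Eventually.of_forall (fun u => ?_))
        rw [hh]
        simp only
        congr 3
        field_simp
        ring
    exact le_csSup (weakSet_bddAbove hC hgm hgb) hmem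
  calc (∑ i ∈ Finset.range κ, ∫ t in Set.Icc (0:ℝ) 1,
        ((κ:ℝ) * lam)⁻¹ * (Set.Icc (d i) (d i + lam)).indicator (h i) t)
      ≤ ∑ _i ∈ Finset.range κ, ((κ:ℝ))⁻¹ * weakNorm g := Finset.sum_le_sum hterm
    _ = weakNorm g := by
        rw [Finset.sum_const, Finset.card_range, nsmul_eq_mul]
        field_simp

/-- The transfer operator of a `(κ,λ)` Baker's map does not expand the weak
norm: `|ℒⁿ f|_w ≤ |f|_w` for all `n ≥ 0` and `f ∈ C¹(W^u)`. -/
theorem baker_weak_norm_bound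
    (κ : ℕ) (lam : ℝ) (d : ℕ → ℝ) (hκ : 2 ≤ κ) (hlam : 0 < lam)
    (hlamκ : lam ≤ 1 / κ)
    (hd : ∀ i < κ, 0 ≤ d i ∧ d i + lam ≤ 1)
    (hdisj : ∀ i < κ, ∀ j < κ, i ≠ j → d i + lam ≤ d j ∨ d j + lam ≤ d i)
    (f : ℝ × ℝ → ℝ) (C : ℝ) (hfm : Measurable f) (hfb : ∀ p, |f p| ≤ C)
    (hfl : ∀ s s' t : ℝ, |f (s, t) - f (s', t)| ≤ C * |s - s'|)
    (n : ℕ) :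
    weakNorm ((Lop κ lam d)^[n] f) ≤ weakNorm f := by
  have hC : 0 ≤ C := le_trans (abs_nonneg _) (hfb (0, 0))
  induction n with
  | zero => simp
  | succ n ih =>
    have hprop : ∀ m : ℕ, Measurable ((Lop κ lam d)^[m] f) ∧
        ∀ p, |(Lop κ lam d)^[m] f p| ≤ C / lam ^ m := by
      intro m
      induction m with
      | zero => exact ⟨hfm, by simpa using hfb⟩
      | succ m ihm =>
        rw [Function.iterate_succ_apply']
        constructor
        · exact Lop_measurable κ lam d ihm.1
        · have hbd := Lop_bound κ lam d hκ hlam (C := C / lam ^ m) (by positivity) ihm.2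
          intro p
          calc |Lop κ lam d ((Lop κ lam d)^[m] f) p| ≤ C / lam ^ m / lam := hbd p
            _ = C / lam ^ (m + 1) := by rw [pow_succ]; ring
    obtain ⟨hm, hbd⟩ := hprop n
    calc weakNorm ((Lop κ lam d)^[n+1] f)
        = weakNorm (Lop κ lam d ((Lop κ lam d)^[n] f)) := by
          rw [Function.iterate_succ_apply']
      _ ≤ weakNorm ((Lop κ lam d)^[n] f) :=
          Lop_weakNorm_le κ lam d hκ hlam hlamκ hd (by positivity) hm hbd
      _ ≤ weakNorm f := ih
end

section
/- Let T be a (κ,λ) Baker's map with transfer operator ℒ, and define the strong unstable norm ‖f‖_u = sup over pairs of vertical segments W₁, W₂ and test functions φ_i ∈ C¹(W_i), |φ_i|_{C¹} ≤ 1, agreeing on matching heights (d₀(φ₁,φ₂)=0), of d(W₁,W₂)^{−β} |∫_{W₁} f φ₁ − ∫_{W₂} f φ₂|. Then for all n ≥ 0 and f ∈ C¹(W^u): ‖ℒⁿ f‖_u ≤ κ^{−βn} ‖f‖_u. -/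
open MeasureTheory

/-- The strong unstable norm `‖f‖_u`: sup over pairs of distinct vertical
segments `W₁ = {s₁} × [0,1]`, `W₂ = {s₂} × [0,1]` and a common `C¹` test
function `φ` (so `d₀(φ₁,φ₂) = 0`) with `|φ|_{C¹} ≤ 1`, of
`d(W₁,W₂)^{−β} |∫_{W₁} f φ − ∫_{W₂} f φ|`. -/
noncomputable def unstNorm (β : ℝ) (f : ℝ × ℝ → ℝ) : ℝ :=
  sSup {r | ∃ s₁ ∈ Set.Icc (0 : ℝ) 1, ∃ s₂ ∈ Set.Icc (0 : ℝ) 1, s₁ ≠ s₂ ∧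
    ∃ φ : ℝ → ℝ, ∃ c₀ c₁ : ℝ, c₀ + c₁ ≤ 1 ∧
    (∀ t ∈ Set.Icc (0 : ℝ) 1, |φ t| ≤ c₀) ∧
    (∀ t ∈ Set.Icc (0 : ℝ) 1, ∀ t' ∈ Set.Icc (0 : ℝ) 1, |φ t - φ t'| ≤ c₁ * |t - t'|) ∧
    r = |s₁ - s₂| ^ (-β) *
      |(∫ t in Set.Icc (0 : ℝ) 1, f (s₁, t) * φ t)
        - ∫ t in Set.Icc (0 : ℝ) 1, f (s₂, t) * φ t|}

section Aux
variable {β : ℝ} {f : ℝ × ℝ → ℝ}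

/-- The defining set of the strong unstable norm. -/
def unstSet (β : ℝ) (f : ℝ × ℝ → ℝ) : Set ℝ :=
  {r | ∃ s₁ ∈ Set.Icc (0 : ℝ) 1, ∃ s₂ ∈ Set.Icc (0 : ℝ) 1, s₁ ≠ s₂ ∧
    ∃ φ : ℝ → ℝ, ∃ c₀ c₁ : ℝ, c₀ + c₁ ≤ 1 ∧
    (∀ t ∈ Set.Icc (0 : ℝ) 1, |φ t| ≤ c₀) ∧
    (∀ t ∈ Set.Icc (0 : ℝ) 1, ∀ t' ∈ Set.Icc (0 : ℝ) 1, |φ t - φ t'| ≤ c₁ * |t - t'|) ∧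
    r = |s₁ - s₂| ^ (-β) *
      |(∫ t in Set.Icc (0 : ℝ) 1, f (s₁, t) * φ t)
        - ∫ t in Set.Icc (0 : ℝ) 1, f (s₂, t) * φ t|}

lemma zero_mem_unstSet : (0 : ℝ) ∈ unstSet β f := by
  refine ⟨0, by norm_num, 1, by norm_num, by norm_num, fun _ => 0, 0, 0, by norm_num,
    by simp, by simp, by simp⟩

lemma lip_c₁_nonneg {φ : ℝ → ℝ} {c₁ : ℝ}
    (hlip : ∀ t ∈ Set.Icc (0:ℝ) 1, ∀ t' ∈ Set.Icc (0:ℝ) 1, |φ t - φ t'| ≤ c₁ * |t - t'|) :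
    0 ≤ c₁ := by
  have := hlip 0 (by norm_num) 1 (by norm_num)
  simp at this
  exact le_trans (abs_nonneg _) this

lemma phi_aesm {φ : ℝ → ℝ} {c₁ : ℝ}
    (hlip : ∀ t ∈ Set.Icc (0:ℝ) 1, ∀ t' ∈ Set.Icc (0:ℝ) 1, |φ t - φ t'| ≤ c₁ * |t - t'|) :
    AEStronglyMeasurable φ (volume.restrict (Set.Icc (0:ℝ) 1)) := by
  have hcont : ContinuousOn φ (Set.Icc (0:ℝ) 1) := by
    have : LipschitzOnWith (Real.toNNReal c₁) φ (Set.Icc (0:ℝ) 1) :=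
      LipschitzOnWith.of_dist_le_mul fun x hx y hy => by
        rw [Real.dist_eq, Real.dist_eq]
        exact (hlip x hx y hy).trans (by gcongr; exact Real.le_coe_toNNReal c₁)
    exact this.continuousOn
  exact (hcont.aemeasurable measurableSet_Icc).aestronglyMeasurable

lemma integrableOn_mul_phi {g : ℝ → ℝ} {M : ℝ} (hg : Measurable g) (hgb : ∀ t, |g t| ≤ M)
    {φ : ℝ → ℝ} {c₀ : ℝ} (hφm : AEStronglyMeasurable φ (volume.restrict (Set.Icc (0:ℝ) 1)))
    (hφb : ∀ t ∈ Set.Icc (0:ℝ) 1, |φ t| ≤ c₀) :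
    IntegrableOn (fun t => g t * φ t) (Set.Icc (0:ℝ) 1) := by
  refine Integrable.mono' (integrable_const (M * c₀)) (hg.aestronglyMeasurable.mul hφm) ?_
  rw [ae_restrict_iff' measurableSet_Icc]
  filter_upwards with t ht
  rw [Real.norm_eq_abs, abs_mul]
  exact mul_le_mul (hgb t) (hφb t ht) (abs_nonneg _) ((abs_nonneg _).trans (hgb t))

lemma unstSet_bddAbove {C : ℝ} (hβ1 : β ≤ 1) (hfm : Measurable f) (hfb : ∀ p, |f p| ≤ C)
    (hfl : ∀ s s' t : ℝ, |f (s, t) - f (s', t)| ≤ C * |s - s'|) :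
    BddAbove (unstSet β f) ∧ ∀ r ∈ unstSet β f, r ≤ C := by
  have hC : 0 ≤ C := le_trans (abs_nonneg _) (hfb (0, 0))
  have key : ∀ r ∈ unstSet β f, r ≤ C := by
    rintro r ⟨s₁, hs₁, s₂, hs₂, hne, φ, c₀, c₁, hsum, hφb, hφl, rfl⟩
    have hc₁ : 0 ≤ c₁ := lip_c₁_nonneg hφl
    have hc₀1 : c₀ ≤ 1 := by linarith
    have hφm := phi_aesm hφl
    have h1 : IntegrableOn (fun t => f (s₁, t) * φ t) (Set.Icc (0:ℝ) 1) :=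
      integrableOn_mul_phi (hfm.comp (measurable_const.prodMk measurable_id))
        (fun t => hfb _) hφm hφb
    have h2 : IntegrableOn (fun t => f (s₂, t) * φ t) (Set.Icc (0:ℝ) 1) :=
      integrableOn_mul_phi (hfm.comp (measurable_const.prodMk measurable_id))
        (fun t => hfb _) hφm hφb
    have hd : (∫ t in Set.Icc (0:ℝ) 1, f (s₁, t) * φ t)
        - ∫ t in Set.Icc (0:ℝ) 1, f (s₂, t) * φ t
        = ∫ t in Set.Icc (0:ℝ) 1, (f (s₁, t) - f (s₂, t)) * φ t := by
      rw [← integral_sub h1 h2]; congr 1; ext t; ring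
    have hx : (0:ℝ) < |s₁ - s₂| := abs_pos.mpr (sub_ne_zero.mpr hne)
    have hx1 : |s₁ - s₂| ≤ 1 := by
      rw [abs_le]; constructor <;> [linarith [hs₁.1, hs₂.2]; linarith [hs₁.2, hs₂.1]]
    have hbound : |(∫ t in Set.Icc (0:ℝ) 1, f (s₁, t) * φ t)
        - ∫ t in Set.Icc (0:ℝ) 1, f (s₂, t) * φ t| ≤ C * |s₁ - s₂| := by
      rw [hd]
      calc |∫ t in Set.Icc (0:ℝ) 1, (f (s₁, t) - f (s₂, t)) * φ t|
          ≤ ∫ t in Set.Icc (0:ℝ) 1, |f (s₁, t) - f (s₂, t)| * |φ t| := by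
            simpa [Real.norm_eq_abs] using
              norm_integral_le_integral_norm (μ := volume.restrict (Set.Icc (0:ℝ) 1))
                (fun t => (f (s₁, t) - f (s₂, t)) * φ t)
        _ ≤ ∫ t in Set.Icc (0:ℝ) 1, C * |s₁ - s₂| := by
            refine integral_mono_of_nonneg ?_ (integrable_const _) ?_
            · exact Filter.Eventually.of_forall fun t => by positivity
            rw [Filter.EventuallyLE, ae_restrict_iff' measurableSet_Icc]
            filter_upwards with t ht
            have h1 : |f (s₁, t) - f (s₂, t)| * |φ t| ≤ (C * |s₁ - s₂|) * 1 :=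
              mul_le_mul (hfl _ _ _) ((hφb t ht).trans hc₀1) (abs_nonneg _)
                (by positivity)
            linarith
        _ = C * |s₁ - s₂| := by
            rw [setIntegral_const, Real.volume_real_Icc]
            norm_num
    calc |s₁ - s₂| ^ (-β) * |(∫ t in Set.Icc (0:ℝ) 1, f (s₁, t) * φ t)
          - ∫ t in Set.Icc (0:ℝ) 1, f (s₂, t) * φ t|
        ≤ |s₁ - s₂| ^ (-β) * (C * |s₁ - s₂|) :=
          mul_le_mul_of_nonneg_left hbound (Real.rpow_nonneg hx.le _)
      _ = C * |s₁ - s₂| ^ (1 - β) := by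
          rw [show (1:ℝ) - β = -β + 1 by ring, Real.rpow_add hx, Real.rpow_one]; ring
      _ ≤ C * 1 :=
          mul_le_mul_of_nonneg_left (Real.rpow_le_one hx.le hx1 (by linarith)) hC
      _ = C := mul_one C
  exact ⟨⟨C, fun r hr => key r hr⟩, key⟩
end Aux

section Main
variable {β : ℝ}

lemma unstNorm_eq (β : ℝ) (f : ℝ × ℝ → ℝ) : unstNorm β f = sSup (unstSet β f) := rfl

lemma Lop_props (κ : ℕ) (lam : ℝ) (d : ℕ → ℝ) (hκ : 1 ≤ κ) (hlam : 0 < lam)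
    (f : ℝ × ℝ → ℝ) (C : ℝ) (hfm : Measurable f) (hfb : ∀ p, |f p| ≤ C)
    (hfl : ∀ s s' t : ℝ, |f (s, t) - f (s', t)| ≤ C * |s - s'|) :
    Measurable (Lop κ lam d f) ∧ (∀ p, |Lop κ lam d f p| ≤ C / lam) ∧
      (∀ s s' t : ℝ, |Lop κ lam d f (s, t) - Lop κ lam d f (s', t)| ≤ (C / lam) * |s - s'|) := by
  have hC : 0 ≤ C := le_trans (abs_nonneg _) (hfb (0, 0))
  have hκ0 : (0:ℝ) < κ := by exact_mod_cast hκ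
  refine ⟨?_, ?_, ?_⟩
  · unfold Lop
    apply Measurable.const_mul
    apply Finset.measurable_sum
    intro i _
    apply Measurable.ite
    · simp only [Set.setOf_and]
      exact (measurableSet_le measurable_const measurable_snd).inter
        (measurableSet_le measurable_snd measurable_const)
    · exact hfm.comp (((measurable_fst.add_const _).div_const _).prodMk
        ((measurable_snd.sub_const _).div_const _))
    · exact measurable_const
  · intro p
    unfold Lop
    rw [abs_mul, abs_inv, abs_of_pos (by positivity : (0:ℝ) < (κ:ℝ) * lam)]
    calc ((κ:ℝ) * lam)⁻¹ * |∑ i ∈ Finset.range κ,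
          if d i ≤ p.2 ∧ p.2 ≤ d i + lam then f ((p.1 + i) / κ, (p.2 - d i) / lam) else 0|
        ≤ ((κ:ℝ) * lam)⁻¹ * ∑ i ∈ Finset.range κ, C := by
          refine mul_le_mul_of_nonneg_left ?_ (by positivity)
          refine (Finset.abs_sum_le_sum_abs _ _).trans (Finset.sum_le_sum fun i _ => ?_)
          split
          · exact hfb _
          · simpa using hC
      _ = C / lam := by
          rw [Finset.sum_const, Finset.card_range, nsmul_eq_mul]
          field_simp
  · intro s s' t
    unfold Lop
    rw [← mul_sub, ← Finset.sum_sub_distrib, abs_mul, abs_inv,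
      abs_of_pos (by positivity : (0:ℝ) < (κ:ℝ) * lam)]
    calc ((κ:ℝ) * lam)⁻¹ * |∑ i ∈ Finset.range κ,
          ((if d i ≤ t ∧ t ≤ d i + lam then f ((s + i) / κ, (t - d i) / lam) else 0)
            - if d i ≤ t ∧ t ≤ d i + lam then f ((s' + i) / κ, (t - d i) / lam) else 0)|
        ≤ ((κ:ℝ) * lam)⁻¹ * ∑ i ∈ Finset.range κ, C * (|s - s'| / κ) := by
          refine mul_le_mul_of_nonneg_left ?_ (by positivity)
          refine (Finset.abs_sum_le_sum_abs _ _).trans (Finset.sum_le_sum fun i _ => ?_)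
          split
          · have h1 : |f ((s + i) / κ, (t - d i) / lam) - f ((s' + i) / κ, (t - d i) / lam)|
                ≤ C * |(s + i) / κ - (s' + i) / κ| := hfl _ _ _
            have h2 : (s + i) / κ - (s' + i) / κ = (s - s') / κ := by ring
            rw [h2, abs_div, abs_of_pos hκ0] at h1
            exact h1
          · simp only [sub_self, abs_zero]
            positivity
      _ ≤ C / lam * |s - s'| := by
          rw [Finset.sum_const, Finset.card_range, nsmul_eq_mul]
          rw [show ((κ:ℝ) * lam)⁻¹ * ((κ:ℝ) * (C * (|s - s'| / κ))) = C / lam * |s - s'| / κ by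
            field_simp]
          have h3 : 0 ≤ C / lam * |s - s'| := by positivity
          exact div_le_self h3 (by exact_mod_cast hκ)

lemma Lop_integral_decomp (κ : ℕ) (lam : ℝ) (d : ℕ → ℝ) (hκ : 1 ≤ κ) (hlam : 0 < lam)
    (hd : ∀ i < κ, 0 ≤ d i ∧ d i + lam ≤ 1)
    (f : ℝ × ℝ → ℝ) (C : ℝ) (hfm : Measurable f) (hfb : ∀ p, |f p| ≤ C)
    (φ : ℝ → ℝ) (hφm : AEStronglyMeasurable φ (volume.restrict (Set.Icc (0:ℝ) 1)))
    (hφb : ∀ t ∈ Set.Icc (0:ℝ) 1, |φ t| ≤ 1) (s : ℝ) :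
    (∫ t in Set.Icc (0:ℝ) 1, Lop κ lam d f (s, t) * φ t)
      = ((κ:ℝ) * lam)⁻¹ * ∑ i ∈ Finset.range κ,
          (lam * ∫ u in Set.Icc (0:ℝ) 1, f ((s + i) / κ, u) * φ (lam * u + d i)) := by
  have h1 : ∀ t : ℝ, Lop κ lam d f (s, t) * φ t
      = ((κ:ℝ) * lam)⁻¹ * ∑ i ∈ Finset.range κ,
          Set.indicator (Set.Icc (d i) (d i + lam))
            (fun t => f ((s + i) / κ, (t - d i) / lam) * φ t) t := by
    intro t
    unfold Lop
    rw [mul_assoc]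
    congr 1
    rw [Finset.sum_mul]
    refine Finset.sum_congr rfl fun i _ => ?_
    rw [ite_mul, zero_mul, Set.indicator_apply]
    by_cases h : d i ≤ t ∧ t ≤ d i + lam
    · rw [if_pos h, if_pos (Set.mem_Icc.mpr h)]
    · rw [if_neg h, if_neg (fun hh => h (Set.mem_Icc.mp hh))]
  simp only [h1]
  rw [integral_const_mul]
  congr 1
  rw [integral_finset_sum]
  · refine Finset.sum_congr rfl fun i hi => ?_
    obtain ⟨hd0, hd1⟩ := hd i (Finset.mem_range.mp hi)
    rw [setIntegral_indicator measurableSet_Icc,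
      Set.inter_eq_self_of_subset_right (Set.Icc_subset_Icc hd0 (by linarith))]
    set F : ℝ → ℝ := fun t => f ((s + (i:ℝ)) / κ, (t - d i) / lam) * φ t with hF
    have hFc : ∀ u : ℝ, F (lam * u + d i) = f ((s + i) / κ, u) * φ (lam * u + d i) := by
      intro u
      simp only [hF, add_sub_cancel_right, mul_div_cancel_left₀ _ hlam.ne']
    have e1 : ∫ t in Set.Icc (d i) (d i + lam), F t = ∫ t in (d i)..(d i + lam), F t := by
      rw [intervalIntegral.integral_of_le (by linarith), integral_Icc_eq_integral_Ioc]
    have e2 : (∫ u in Set.Icc (0:ℝ) 1, f ((s + i) / κ, u) * φ (lam * u + d i))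
        = ∫ u in (0:ℝ)..1, F (lam * u + d i) := by
      simp only [hFc]
      rw [intervalIntegral.integral_of_le (by norm_num), integral_Icc_eq_integral_Ioc]
    have e3 : lam • ∫ u in (0:ℝ)..1, F (lam * u + d i)
        = ∫ x in (lam * 0 + d i)..(lam * 1 + d i), F x :=
      intervalIntegral.smul_integral_comp_mul_add F lam (d i)
    rw [mul_zero, zero_add, mul_one] at e3
    rw [e1, e2, ← smul_eq_mul, e3, show lam + d i = d i + lam by ring]
  · intro i hi
    refine Integrable.indicator ?_ measurableSet_Icc
    exact integrableOn_mul_phi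
      (hfm.comp (measurable_const.prodMk ((measurable_id.sub_const _).div_const _)))
      (fun t => hfb _) hφm hφb

lemma unstNorm_Lop_le (κ : ℕ) (lam β : ℝ) (d : ℕ → ℝ) (hκ : 2 ≤ κ) (hlam : 0 < lam)
    (hlamκ : lam ≤ 1 / κ) (hβ : β ∈ Set.Ioo (0:ℝ) 1)
    (hd : ∀ i < κ, 0 ≤ d i ∧ d i + lam ≤ 1)
    (f : ℝ × ℝ → ℝ) (C : ℝ) (hfm : Measurable f) (hfb : ∀ p, |f p| ≤ C)
    (hfl : ∀ s s' t : ℝ, |f (s, t) - f (s', t)| ≤ C * |s - s'|) :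
    unstNorm β (Lop κ lam d f) ≤ (κ:ℝ) ^ (-β) * unstNorm β f := by
  obtain ⟨hβ0, hβ1⟩ := hβ
  have hbdd := (unstSet_bddAbove (β := β) hβ1.le hfm hfb hfl).1
  have hN0 : 0 ≤ unstNorm β f := by
    rw [unstNorm_eq]
    exact le_csSup hbdd zero_mem_unstSet
  have hκ0 : (0:ℝ) < κ := by positivity
  have hκ1 : (1:ℝ) ≤ κ := by exact_mod_cast (by omega : 1 ≤ κ)
  have hlam1 : lam ≤ 1 := hlamκ.trans ((div_le_one hκ0).mpr hκ1)
  rw [unstNorm_eq]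
  apply Real.sSup_le _ (mul_nonneg (Real.rpow_nonneg hκ0.le _) hN0)
  rintro r ⟨s₁, hs₁, s₂, hs₂, hne, φ, c₀, c₁, hsum, hφb, hφl, rfl⟩
  have hc₁ : 0 ≤ c₁ := lip_c₁_nonneg hφl
  have hc₀ : 0 ≤ c₀ := le_trans (abs_nonneg _) (hφb 0 (by norm_num))
  have hφb1 : ∀ t ∈ Set.Icc (0:ℝ) 1, |φ t| ≤ 1 := fun t ht => (hφb t ht).trans (by linarith)
  have hφm := phi_aesm hφl
  have hx0 : (0:ℝ) < |s₁ - s₂| := abs_pos.mpr (sub_ne_zero.mpr hne)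
  rw [Lop_integral_decomp κ lam d (by omega) hlam hd f C hfm hfb φ hφm hφb1 s₁,
    Lop_integral_decomp κ lam d (by omega) hlam hd f C hfm hfb φ hφm hφb1 s₂,
    ← mul_sub, ← Finset.sum_sub_distrib]
  have hkey : ∀ i ∈ Finset.range κ,
      |(∫ u in Set.Icc (0:ℝ) 1, f ((s₁ + i) / κ, u) * φ (lam * u + d i))
        - ∫ u in Set.Icc (0:ℝ) 1, f ((s₂ + i) / κ, u) * φ (lam * u + d i)|
      ≤ (|s₁ - s₂| * (κ:ℝ)⁻¹) ^ β * unstNorm β f := by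
    intro i hi
    have hiκ : (i:ℝ) + 1 ≤ κ := by exact_mod_cast Finset.mem_range.mp hi
    have hi0 : (0:ℝ) ≤ i := Nat.cast_nonneg i
    have hmem₁ : (s₁ + i) / κ ∈ Set.Icc (0:ℝ) 1 :=
      ⟨div_nonneg (by linarith [hs₁.1]) hκ0.le,
       (div_le_one hκ0).mpr (by linarith [hs₁.2])⟩
    have hmem₂ : (s₂ + i) / κ ∈ Set.Icc (0:ℝ) 1 :=
      ⟨div_nonneg (by linarith [hs₂.1]) hκ0.le,
       (div_le_one hκ0).mpr (by linarith [hs₂.2])⟩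
    have hne' : (s₁ + i) / κ ≠ (s₂ + i) / κ := by
      intro h
      apply hne
      field_simp at h
      linarith
    have hmemIcc : ∀ u ∈ Set.Icc (0:ℝ) 1, lam * u + d i ∈ Set.Icc (0:ℝ) 1 := by
      intro u hu
      obtain ⟨hdi0, hdi1⟩ := hd i (Finset.mem_range.mp hi)
      constructor
      · have := mul_nonneg hlam.le hu.1
        linarith
      · have := mul_le_of_le_one_right hlam.le hu.2
        linarith
    have hgap : |(s₁ + i) / κ - (s₂ + i) / κ| = |s₁ - s₂| * (κ:ℝ)⁻¹ := by
      rw [show (s₁ + i) / κ - (s₂ + i) / κ = (s₁ - s₂) / κ by ring, abs_div,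
        abs_of_pos hκ0, div_eq_mul_inv]
    have hgap0 : (0:ℝ) < |(s₁ + i) / κ - (s₂ + i) / κ| :=
      abs_pos.mpr (sub_ne_zero.mpr hne')
    have hmemSet : |(s₁ + i) / κ - (s₂ + i) / κ| ^ (-β) *
        |(∫ t in Set.Icc (0:ℝ) 1, f ((s₁ + i) / κ, t) * φ (lam * t + d i))
          - ∫ t in Set.Icc (0:ℝ) 1, f ((s₂ + i) / κ, t) * φ (lam * t + d i)|
        ∈ unstSet β f := by
      refine ⟨(s₁ + i) / κ, hmem₁, (s₂ + i) / κ, hmem₂, hne',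
        fun u => φ (lam * u + d i), c₀, c₁, hsum, ?_, ?_, rfl⟩
      · intro t ht
        exact hφb _ (hmemIcc t ht)
      · intro t ht t' ht'
        have h1 := hφl _ (hmemIcc t ht) _ (hmemIcc t' ht')
        have h2 : |lam * t + d i - (lam * t' + d i)| = lam * |t - t'| := by
          rw [show lam * t + d i - (lam * t' + d i) = lam * (t - t') by ring, abs_mul,
            abs_of_pos hlam]
        rw [h2] at h1
        refine h1.trans ?_
        have := abs_nonneg (t - t')
        nlinarith [mul_nonneg (mul_nonneg hc₁ this) (sub_nonneg.mpr hlam1)]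
    have hle := le_csSup hbdd hmemSet
    have heq : |(∫ u in Set.Icc (0:ℝ) 1, f ((s₁ + i) / κ, u) * φ (lam * u + d i))
        - ∫ u in Set.Icc (0:ℝ) 1, f ((s₂ + i) / κ, u) * φ (lam * u + d i)|
        = |(s₁ + i) / κ - (s₂ + i) / κ| ^ β *
          (|(s₁ + i) / κ - (s₂ + i) / κ| ^ (-β) *
            |(∫ t in Set.Icc (0:ℝ) 1, f ((s₁ + i) / κ, t) * φ (lam * t + d i))
              - ∫ t in Set.Icc (0:ℝ) 1, f ((s₂ + i) / κ, t) * φ (lam * t + d i)|) := by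
      rw [← mul_assoc, ← Real.rpow_add hgap0]
      norm_num
    rw [heq, ← hgap]
    exact mul_le_mul_of_nonneg_left hle (Real.rpow_nonneg hgap0.le _)
  have hΔ : |((κ:ℝ) * lam)⁻¹ * ∑ i ∈ Finset.range κ,
      ((lam * ∫ u in Set.Icc (0:ℝ) 1, f ((s₁ + i) / κ, u) * φ (lam * u + d i))
        - lam * ∫ u in Set.Icc (0:ℝ) 1, f ((s₂ + i) / κ, u) * φ (lam * u + d i))|
      ≤ (|s₁ - s₂| * (κ:ℝ)⁻¹) ^ β * unstNorm β f := by
    rw [abs_mul, abs_inv, abs_of_pos (by positivity : (0:ℝ) < (κ:ℝ) * lam)]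
    calc ((κ:ℝ) * lam)⁻¹ * |∑ i ∈ Finset.range κ,
          ((lam * ∫ u in Set.Icc (0:ℝ) 1, f ((s₁ + i) / κ, u) * φ (lam * u + d i))
            - lam * ∫ u in Set.Icc (0:ℝ) 1, f ((s₂ + i) / κ, u) * φ (lam * u + d i))|
        ≤ ((κ:ℝ) * lam)⁻¹ * ∑ i ∈ Finset.range κ,
            (lam * ((|s₁ - s₂| * (κ:ℝ)⁻¹) ^ β * unstNorm β f)) := by
          refine mul_le_mul_of_nonneg_left ?_ (by positivity)
          refine (Finset.abs_sum_le_sum_abs _ _).trans (Finset.sum_le_sum fun i hi => ?_)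
          rw [← mul_sub, abs_mul, abs_of_pos hlam]
          exact mul_le_mul_of_nonneg_left (hkey i hi) hlam.le
      _ = (|s₁ - s₂| * (κ:ℝ)⁻¹) ^ β * unstNorm β f := by
          rw [Finset.sum_const, Finset.card_range, nsmul_eq_mul]
          field_simp
  calc |s₁ - s₂| ^ (-β) * |((κ:ℝ) * lam)⁻¹ * ∑ i ∈ Finset.range κ,
        ((lam * ∫ u in Set.Icc (0:ℝ) 1, f ((s₁ + i) / κ, u) * φ (lam * u + d i))
          - lam * ∫ u in Set.Icc (0:ℝ) 1, f ((s₂ + i) / κ, u) * φ (lam * u + d i))|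
      ≤ |s₁ - s₂| ^ (-β) * ((|s₁ - s₂| * (κ:ℝ)⁻¹) ^ β * unstNorm β f) :=
        mul_le_mul_of_nonneg_left hΔ (Real.rpow_nonneg hx0.le _)
    _ = (κ:ℝ) ^ (-β) * unstNorm β f := by
        rw [Real.mul_rpow hx0.le (by positivity), Real.inv_rpow hκ0.le,
          ← Real.rpow_neg hκ0.le]
        rw [show |s₁ - s₂| ^ (-β) * (|s₁ - s₂| ^ β * (κ:ℝ) ^ (-β) * unstNorm β f)
            = (|s₁ - s₂| ^ (-β) * |s₁ - s₂| ^ β) * ((κ:ℝ) ^ (-β) * unstNorm β f) from by ring]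
        rw [← Real.rpow_add hx0]
        norm_num

end Main

/-- Strong unstable Lasota–Yorke inequality for the Baker's map:
`‖ℒⁿ f‖_u ≤ κ^{−βn} ‖f‖_u`. -/
theorem baker_unstable_lasota_yorke
    (κ : ℕ) (lam β : ℝ) (d : ℕ → ℝ) (hκ : 2 ≤ κ) (hlam : 0 < lam)
    (hlamκ : lam ≤ 1 / κ) (hβ : β ∈ Set.Ioo (0 : ℝ) 1)
    (hd : ∀ i < κ, 0 ≤ d i ∧ d i + lam ≤ 1)
    (hdisj : ∀ i < κ, ∀ j < κ, i ≠ j → d i + lam ≤ d j ∨ d j + lam ≤ d i)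
    (f : ℝ × ℝ → ℝ) (C : ℝ) (hfm : Measurable f) (hfb : ∀ p, |f p| ≤ C)
    (hfl : ∀ s s' t : ℝ, |f (s, t) - f (s', t)| ≤ C * |s - s'|)
    (n : ℕ) :
    unstNorm β ((Lop κ lam d)^[n] f) ≤ (κ : ℝ) ^ (-(β * (n : ℝ))) * unstNorm β f := by
  have hκ0 : (0:ℝ) < κ := by positivity
  have hmain : ∀ m : ℕ, (∃ C', Measurable ((Lop κ lam d)^[m] f) ∧
      (∀ p, |((Lop κ lam d)^[m] f) p| ≤ C') ∧
      (∀ s s' t : ℝ, |((Lop κ lam d)^[m] f) (s, t) - ((Lop κ lam d)^[m] f) (s', t)|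
        ≤ C' * |s - s'|)) ∧
      unstNorm β ((Lop κ lam d)^[m] f) ≤ ((κ:ℝ) ^ (-β)) ^ m * unstNorm β f := by
    intro m
    induction m with
    | zero => exact ⟨⟨C, hfm, hfb, hfl⟩, by simp⟩
    | succ m ih =>
      obtain ⟨⟨C', hm, hb, hl⟩, hnorm⟩ := ih
      have hit : (Lop κ lam d)^[m + 1] f = Lop κ lam d ((Lop κ lam d)^[m] f) :=
        Function.iterate_succ_apply' _ _ _
      obtain ⟨hm', hb', hl'⟩ := Lop_props κ lam d (by omega) hlam ((Lop κ lam d)^[m] f) C' hm hb hl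
      refine ⟨⟨C' / lam, by rw [hit]; exact hm', by rw [hit]; exact hb',
        by rw [hit]; exact hl'⟩, ?_⟩
      rw [hit]
      calc unstNorm β (Lop κ lam d ((Lop κ lam d)^[m] f))
          ≤ (κ:ℝ) ^ (-β) * unstNorm β ((Lop κ lam d)^[m] f) :=
            unstNorm_Lop_le κ lam β d hκ hlam hlamκ hβ hd _ C' hm hb hl
        _ ≤ (κ:ℝ) ^ (-β) * (((κ:ℝ) ^ (-β)) ^ m * unstNorm β f) :=
            mul_le_mul_of_nonneg_left hnorm (Real.rpow_nonneg hκ0.le _)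
        _ = ((κ:ℝ) ^ (-β)) ^ (m + 1) * unstNorm β f := by rw [pow_succ]; ring
  have hpow : ((κ:ℝ) ^ (-β)) ^ n = (κ:ℝ) ^ (-(β * (n:ℝ))) := by
    rw [← Real.rpow_natCast ((κ:ℝ) ^ (-β)) n, ← Real.rpow_mul hκ0.le]
    ring_nf
  rw [← hpow]
  exact (hmain n).2
end

section
/- Let U = [0,1] × {t₀} be a horizontal segment, f : U → ℝ Lipschitz, and for ε > 0 define f̄_ε : [0,1]² → ℝ by f̄_ε(s,t) = ε⁻¹ f(s, t₀) if |t − t₀| ≤ ε/2 and 0 otherwise. Then for any vertical segment W = {s} × [0,1], any α ∈ (0,1), any α-Hölder φ on W with |φ|_{C^α(W)} ≤ 1, and any 0 < ε₁ < ε₂: |∫_W (f̄_{ε₁} − f̄_{ε₂}) φ dm_W| ≤ 2 (ε₂/2)^α sup_U |f|. -/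
open MeasureTheory

/-- The smoothed approximation of the standard pair `f δ_U`, where
`U = [0,1] × {t₀}`: the density `f̄_ε(s,t) = ε⁻¹ f(s)` on the `ε/2`-neighborhood
of `U` and `0` outside. -/
noncomputable def fbar (f : ℝ → ℝ) (t₀ ε : ℝ) (s t : ℝ) : ℝ :=
  if |t - t₀| ≤ ε / 2 then ε⁻¹ * f s else 0

lemma holder_continuousOn {φ : ℝ → ℝ} {c₁ α : ℝ} (hα : 0 < α)
    (hφh : ∀ t ∈ Set.Icc (0 : ℝ) 1, ∀ t' ∈ Set.Icc (0 : ℝ) 1,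
      |φ t - φ t'| ≤ c₁ * |t - t'| ^ α) :
    ContinuousOn φ (Set.Icc (0:ℝ) 1) := by
  have hc₁ : 0 ≤ c₁ := by
    have := hφh 0 (by norm_num) 1 (by norm_num)
    simpa using (abs_nonneg (φ 0 - φ 1)).trans this
  intro x hx
  rw [Metric.continuousWithinAt_iff]
  intro ε hε
  have hq : (0:ℝ) < ε / (c₁ + 1) := by positivity
  refine ⟨(ε / (c₁ + 1)) ^ α⁻¹, Real.rpow_pos_of_pos hq _, fun y hy hdist => ?_⟩
  have h1 : |y - x| ^ α ≤ ((ε / (c₁ + 1)) ^ α⁻¹) ^ α :=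
    Real.rpow_le_rpow (abs_nonneg _) (by simpa [Real.dist_eq] using hdist.le) hα.le
  rw [Real.rpow_inv_rpow hq.le hα.ne'] at h1
  have h2 : |φ y - φ x| ≤ c₁ * (ε / (c₁ + 1)) :=
    (hφh y hy x hx).trans (by nlinarith)
  have h3 : c₁ * (ε / (c₁ + 1)) < ε := by
    have := mul_lt_mul_of_pos_right (lt_add_one c₁) hq
    calc c₁ * (ε / (c₁ + 1)) < (c₁ + 1) * (ε / (c₁ + 1)) := this
    _ = ε := by field_simp
  rw [Real.dist_eq]
  exact lt_of_le_of_lt h2 h3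

/-- The approximations `f̄_ε` of a standard pair are Cauchy in the strong stable
norm: for `0 < ε₁ < ε₂`, a vertical segment `W = {s} × [0,1]`, and an `α`-Hölder
test function `φ` with `|φ|_{C^α(W)} ≤ 1`,
`|∫_W (f̄_{ε₁} − f̄_{ε₂}) φ dm_W| ≤ 2 (ε₂/2)^α sup_U |f|`. -/
theorem standard_pair_cauchy_estimate
    (f : ℝ → ℝ) (L F t₀ α ε₁ ε₂ s : ℝ)
    (hf : ∀ u ∈ Set.Icc (0 : ℝ) 1, ∀ v ∈ Set.Icc (0 : ℝ) 1, |f u - f v| ≤ L * |u - v|)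
    (hF : ∀ u ∈ Set.Icc (0 : ℝ) 1, |f u| ≤ F)
    (hα : α ∈ Set.Ioo (0 : ℝ) 1) (hε₁ : 0 < ε₁) (hε : ε₁ < ε₂)
    (hstrip : ε₂ / 2 ≤ t₀ ∧ t₀ + ε₂ / 2 ≤ 1)
    (hs : s ∈ Set.Icc (0 : ℝ) 1)
    (φ : ℝ → ℝ) (c₀ c₁ : ℝ) (hc : c₀ + c₁ ≤ 1)
    (hφ0 : ∀ t ∈ Set.Icc (0 : ℝ) 1, |φ t| ≤ c₀)
    (hφh : ∀ t ∈ Set.Icc (0 : ℝ) 1, ∀ t' ∈ Set.Icc (0 : ℝ) 1,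
      |φ t - φ t'| ≤ c₁ * |t - t'| ^ α) :
    |∫ t in Set.Icc (0 : ℝ) 1, (fbar f t₀ ε₁ s t - fbar f t₀ ε₂ s t) * φ t|
      ≤ 2 * (ε₂ / 2) ^ α * F := by
  obtain ⟨hstrip1, hstrip2⟩ := hstrip
  have hε₂ : 0 < ε₂ := hε₁.trans hε
  have hF0 : 0 ≤ F := (abs_nonneg (f 0)).trans (hF 0 (by norm_num))
  have hc₁ : 0 ≤ c₁ := by
    have := hφh 0 (by norm_num) 1 (by norm_num)
    simpa using (abs_nonneg (φ 0 - φ 1)).trans this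
  have hc₀ : 0 ≤ c₀ := (abs_nonneg (φ 0)).trans (hφ0 0 (by norm_num))
  have hc₁1 : c₁ ≤ 1 := by linarith
  have ht₀ : t₀ ∈ Set.Icc (0:ℝ) 1 := ⟨by linarith, by linarith⟩
  have hφcont : ContinuousOn φ (Set.Icc (0:ℝ) 1) := holder_continuousOn hα.1 hφh
  have hφint : IntegrableOn φ (Set.Icc (0:ℝ) 1) := hφcont.integrableOn_Icc
  -- the key estimate for a single ε
  have key : ∀ ε : ℝ, 0 < ε → ε ≤ ε₂ →
      (IntegrableOn (fun t => fbar f t₀ ε s t * φ t) (Set.Icc (0:ℝ) 1)) ∧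
      |(∫ t in Set.Icc (0 : ℝ) 1, fbar f t₀ ε s t * φ t) - f s * φ t₀|
        ≤ (ε₂ / 2) ^ α * F := by
    intro ε hεpos hεle
    set J : Set ℝ := Set.Icc (t₀ - ε/2) (t₀ + ε/2) with hJ
    have hJsub : J ⊆ Set.Icc (0:ℝ) 1 := by
      apply Set.Icc_subset_Icc <;> linarith
    have hrw : ∀ t, fbar f t₀ ε s t * φ t
        = J.indicator (fun t => ε⁻¹ * f s * φ t) t := by
      intro t
      rw [Set.indicator_apply]
      unfold fbar
      have : |t - t₀| ≤ ε/2 ↔ t ∈ J := by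
        rw [hJ, Set.mem_Icc, abs_le]
        constructor <;> (rintro ⟨a, b⟩; constructor <;> linarith)
      split_ifs with h1 h2 h2
      · ring
      · exact absurd (this.mp h1) h2
      · exact absurd (this.mpr h2) h1
      · exact zero_mul _
    have hφintJ : IntegrableOn (fun t => ε⁻¹ * f s * φ t) J := by
      exact ((hφint.mono_set hJsub).const_mul _)
    have hint : IntegrableOn (fun t => fbar f t₀ ε s t * φ t) (Set.Icc (0:ℝ) 1) := by
      rw [show (fun t => fbar f t₀ ε s t * φ t)
          = fun t => J.indicator (fun t => ε⁻¹ * f s * φ t) t from funext hrw]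
      exact (hφintJ.integrable_indicator measurableSet_Icc).integrableOn
    refine ⟨hint, ?_⟩
    have hvolJ : (volume J).toReal = ε := by
      rw [hJ, Real.volume_Icc]
      rw [show t₀ + ε/2 - (t₀ - ε/2) = ε by ring, ENNReal.toReal_ofReal hεpos.le]
    have hIeq : (∫ t in Set.Icc (0:ℝ) 1, fbar f t₀ ε s t * φ t)
        = ∫ t in J, ε⁻¹ * f s * φ t := by
      simp_rw [hrw]
      rw [setIntegral_indicator measurableSet_Icc,
        Set.inter_eq_self_of_subset_right hJsub]
    have hconstint : IntegrableOn (fun _ : ℝ => ε⁻¹ * f s * φ t₀) J := by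
      exact integrableOn_const (by rw [hJ, Real.volume_Icc]; exact ENNReal.ofReal_ne_top)
    have hconstval : (∫ _ in J, ε⁻¹ * f s * φ t₀) = f s * φ t₀ := by
      rw [setIntegral_const, smul_eq_mul, measureReal_def, hvolJ]
      field_simp
    have hsub : (∫ t in J, ε⁻¹ * f s * (φ t - φ t₀))
        = (∫ t in J, ε⁻¹ * f s * φ t) - ∫ _ in J, ε⁻¹ * f s * φ t₀ := by
      rw [← integral_sub hφintJ hconstint]
      exact integral_congr_ae (Filter.Eventually.of_forall fun t => by ring)
    have hC : ∀ t ∈ J, ‖ε⁻¹ * f s * (φ t - φ t₀)‖ ≤ ε⁻¹ * (F * (c₁ * (ε/2) ^ α)) := by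
      intro t ht
      have htI : t ∈ Set.Icc (0:ℝ) 1 := hJsub ht
      have habs : |t - t₀| ≤ ε / 2 := by
        rw [abs_le]; rw [hJ, Set.mem_Icc] at ht
        constructor <;> linarith [ht.1, ht.2]
      have hpow : |t - t₀| ^ α ≤ (ε/2) ^ α :=
        Real.rpow_le_rpow (abs_nonneg _) habs hα.1.le
      have hpow0 : (0:ℝ) ≤ (ε/2) ^ α := Real.rpow_nonneg (by linarith) α
      have hφb : |φ t - φ t₀| ≤ c₁ * (ε/2) ^ α :=
        (hφh t htI t₀ ht₀).trans (mul_le_mul_of_nonneg_left hpow hc₁)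
      have hfs : |f s| ≤ F := hF s hs
      rw [Real.norm_eq_abs, abs_mul, abs_mul, abs_inv, abs_of_pos hεpos, mul_assoc]
      have h1 : 0 ≤ ε⁻¹ := by positivity
      refine mul_le_mul_of_nonneg_left ?_ h1
      exact mul_le_mul hfs hφb (abs_nonneg _) hF0
    have herr : |∫ t in J, ε⁻¹ * f s * (φ t - φ t₀)|
        ≤ ε⁻¹ * (F * (c₁ * (ε/2) ^ α)) * ε := by
      have hfin : volume J < ⊤ := by rw [hJ, Real.volume_Icc]; exact ENNReal.ofReal_lt_top
      have hintErr : IntegrableOn (fun t => ε⁻¹ * f s * (φ t - φ t₀)) J :=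
        (hφintJ.sub hconstint).congr (Filter.Eventually.of_forall fun t => by simp only [Pi.sub_apply]; ring)
      have := norm_setIntegral_le_of_norm_le_const hfin hC
        (f := fun t => ε⁻¹ * f s * (φ t - φ t₀))
      rw [measureReal_def, hvolJ] at this
      simpa using this
    have hkey : (∫ t in J, ε⁻¹ * f s * φ t) - f s * φ t₀
        = ∫ t in J, ε⁻¹ * f s * (φ t - φ t₀) := by
      rw [hsub, hconstval]
    rw [hIeq, hkey]
    have hrpow : (ε/2) ^ α ≤ (ε₂/2) ^ α :=
      Real.rpow_le_rpow (by linarith) (by linarith) hα.1.le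
    have hrpow0 : (0:ℝ) ≤ (ε/2) ^ α := Real.rpow_nonneg (by linarith) α
    calc |∫ t in J, ε⁻¹ * f s * (φ t - φ t₀)|
        ≤ ε⁻¹ * (F * (c₁ * (ε/2) ^ α)) * ε := herr
      _ = F * (c₁ * (ε/2) ^ α) := by field_simp
      _ ≤ (ε₂/2) ^ α * F := by
          have h1 : c₁ * (ε/2) ^ α ≤ (ε₂/2) ^ α :=
            le_trans (mul_le_of_le_one_left hrpow0 hc₁1) hrpow
          calc F * (c₁ * (ε/2) ^ α) ≤ F * ((ε₂/2) ^ α) :=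
                mul_le_mul_of_nonneg_left h1 hF0
            _ = (ε₂/2) ^ α * F := mul_comm _ _
  obtain ⟨hint₁, hb₁⟩ := key ε₁ hε₁ hε.le
  obtain ⟨hint₂, hb₂⟩ := key ε₂ hε₂ le_rfl
  have hsplit : (∫ t in Set.Icc (0:ℝ) 1, (fbar f t₀ ε₁ s t - fbar f t₀ ε₂ s t) * φ t)
      = (∫ t in Set.Icc (0:ℝ) 1, fbar f t₀ ε₁ s t * φ t)
        - ∫ t in Set.Icc (0:ℝ) 1, fbar f t₀ ε₂ s t * φ t := by
    rw [← integral_sub hint₁ hint₂]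
    exact integral_congr_ae (Filter.Eventually.of_forall fun t => by ring)
  rw [hsplit]
  have habs : |(∫ t in Set.Icc (0:ℝ) 1, fbar f t₀ ε₁ s t * φ t)
      - ∫ t in Set.Icc (0:ℝ) 1, fbar f t₀ ε₂ s t * φ t|
      ≤ |(∫ t in Set.Icc (0:ℝ) 1, fbar f t₀ ε₁ s t * φ t) - f s * φ t₀|
        + |(∫ t in Set.Icc (0:ℝ) 1, fbar f t₀ ε₂ s t * φ t) - f s * φ t₀| := by
    have heq : (∫ t in Set.Icc (0:ℝ) 1, fbar f t₀ ε₁ s t * φ t)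
        - (∫ t in Set.Icc (0:ℝ) 1, fbar f t₀ ε₂ s t * φ t)
        = ((∫ t in Set.Icc (0:ℝ) 1, fbar f t₀ ε₁ s t * φ t) - f s * φ t₀)
          - ((∫ t in Set.Icc (0:ℝ) 1, fbar f t₀ ε₂ s t * φ t) - f s * φ t₀) := by ring
    rw [heq]
    exact abs_sub _ _
  linarith
end
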